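/- arXiv:1303.3652 — 8 statements merged into one kernel-verified Lean document; each statement's English description precedes it below -/
import Mathlib

section
/- Let P be a (3+1)-free poset. Then for all vertices a, b ∈ P, either D_a ⊆ D_b or U_a ⊆ U_b. -/
/-!
Witnesses `x ∈ D_a \ D_b` and `y ∈ U_a \ U_b` force `a ∥ b`, and then `b` is incomparable to
every element of the chain `x < a < y`.
-/

/-- `x` and `y` are incomparable. -/
def Incomp {P : Type*} [PartialOrder P] (x y : P) : Prop := ¬ x ≤ y ∧ ¬ y ≤ x

/-- A poset is `(3+1)`-free if it contains no induced subposet consisting of a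
chain `a < b < c` together with a vertex `d` incomparable to `a`, `b` and `c`. -/
def ThreePlusOneFree (P : Type*) [PartialOrder P] : Prop :=
  ¬ ∃ a b c d : P, a < b ∧ b < c ∧ Incomp d a ∧ Incomp d b ∧ Incomp d c

/-- The strict downset of a vertex. -/
def Dset {P : Type*} [PartialOrder P] (a : P) : Set P := {x | x < a}

/-- The strict upset of a vertex. -/
def Uset {P : Type*} [PartialOrder P] (a : P) : Set P := {x | a < x}

section

variable {P : Type*} [PartialOrder P] {a b x y : P}

theorem incomp_of_lt_of_not_lt (hxa : x < a) (hxb : ¬ x < b) (hba : ¬ b ≤ a) :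
    Incomp b x := by
  refine ⟨fun hbx => hba (hbx.trans hxa.le), fun hxb' => ?_⟩
  obtain rfl : x = b := hxb'.eq_of_not_lt hxb
  exact hba hxa.le

theorem incomp_of_gt_of_not_gt (hay : a < y) (hby : ¬ b < y) (hab : ¬ a ≤ b) :
    Incomp b y := by
  refine ⟨fun hby' => ?_, fun hyb => hab (hay.le.trans hyb)⟩
  obtain rfl : b = y := hby'.eq_of_not_lt hby
  exact hab hay.le

end

theorem downsets_or_upsets_nested {P : Type*} [PartialOrder P]
    (hP : ThreePlusOneFree P) (a b : P) :
    Dset a ⊆ Dset b ∨ Uset a ⊆ Uset b := by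
  by_contra! h
  obtain ⟨⟨x, hxa : x < a, hxb : ¬ x < b⟩, ⟨y, hay : a < y, hby : ¬ b < y⟩⟩ :=
    And.imp Set.not_subset.mp Set.not_subset.mp h
  have hab : ¬ a ≤ b := fun hab => hxb (hxa.trans_le hab)
  have hba : ¬ b ≤ a := fun hba => hby (hba.trans_lt hay)
  exact hP ⟨x, a, y, b, hxa, hay, incomp_of_lt_of_not_lt hxa hxb hba, ⟨hba, hab⟩,
    incomp_of_gt_of_not_gt hay hby hab⟩
end

section
/- Let P be a (3+1)-free poset and let a, b ∈ P. If a ⊤⊤ b (that is, D_a ∥ D_b), then U_a = U_b. -/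
/-- Two sets are parallel (incomparable under inclusion). -/
def SetPar {P : Type*} (S T : Set P) : Prop := ¬ S ⊆ T ∧ ¬ T ⊆ S

/-- `a ⊤⊤ b`: the downsets of `a` and `b` are incomparable under inclusion. -/
def TopTangleRel {P : Type*} [PartialOrder P] (a b : P) : Prop := SetPar (Dset a) (Dset b)

/-- `a ⊥⊥ b`: the upsets of `a` and `b` are incomparable under inclusion. -/
def BotTangleRel {P : Type*} [PartialOrder P] (a b : P) : Prop := SetPar (Uset a) (Uset b)

section

variable {P : Type*} [PartialOrder P]

theorem dset_mono : Monotone (Dset : P → Set P) :=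
  fun _ _ hab _ hx => lt_of_lt_of_le hx hab

theorem uset_subset_uset_of_not_dset_subset (hP : ThreePlusOneFree P) {a b : P}
    (hDab : ¬ Dset a ⊆ Dset b) (hba : ¬ b ≤ a) : Uset a ⊆ Uset b := by
  have hab : ¬ a ≤ b := fun h => hDab (dset_mono h)
  obtain ⟨x, hxa, hxb⟩ := Set.not_subset.1 hDab
  intro z (haz : a < z)
  by_contra hbz
  -- `b` is incomparable to the whole chain `x < a < z`.
  refine hP ⟨x, a, z, b, hxa, haz, ⟨?_, ?_⟩, ⟨hba, hab⟩, ⟨?_, ?_⟩⟩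
  · exact fun hbx => hba (hbx.trans hxa.le)
  · exact fun hxb' => hxb (hxb'.lt_of_ne (by rintro rfl; exact hba hxa.le))
  · exact fun hbz' => hbz (hbz'.lt_of_ne (by rintro rfl; exact hab haz.le))
  · exact fun hzb => hab (haz.le.trans hzb)

end

theorem upsets_eq_of_topTangleRel {P : Type*} [PartialOrder P]
    (hP : ThreePlusOneFree P) (a b : P) (h : TopTangleRel a b) :
    Uset a = Uset b := by
  obtain ⟨hDab, hDba⟩ := h
  have hab : ¬ a ≤ b := fun hle => hDab (dset_mono hle)
  have hba : ¬ b ≤ a := fun hle => hDba (dset_mono hle)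
  exact (uset_subset_uset_of_not_dset_subset hP hDab hba).antisymm
    (uset_subset_uset_of_not_dset_subset hP hDba hab)
end

section
/- Let P be a (3+1)-free poset and let a, b ∈ P. If a ⊥⊥ b (that is, U_a ∥ U_b), then D_a = D_b. -/
-- With `a < u`, `¬ b < u`: an `x < a` not below `b` would make `x < a < u` a chain with `b` incomparable to all of it.
theorem ThreePlusOneFree.dset_subset_of_not_uset_subset {P : Type*} [PartialOrder P]
    (hP : ThreePlusOneFree P) {a b : P} (h : ¬ Uset a ⊆ Uset b) : Dset a ⊆ Dset b := by
  obtain ⟨u, hau : a < u, hbu : ¬ b < u⟩ := Set.not_subset.mp h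
  intro x (hxa : x < a)
  by_contra hxb
  change ¬ x < b at hxb
  exact hP ⟨x, a, u, b, hxa, hau, ⟨by order, by order⟩, ⟨by order, by order⟩, ⟨by order, by order⟩⟩

theorem downsets_eq_of_botTangleRel {P : Type*} [PartialOrder P]
    (hP : ThreePlusOneFree P) (a b : P) (h : BotTangleRel a b) :
    Dset a = Dset b :=
  (hP.dset_subset_of_not_uset_subset h.1).antisymm (hP.dset_subset_of_not_uset_subset h.2)
end

section
/- Let P be a (3+1)-free poset and let a, b, c ∈ P. Then it is not the case that both a ⊤⊤ b and b ⊥⊥ c hold. -/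
/-!
The witnesses of `a ⊤⊤ b` and `b ⊥⊥ c` give `x < a`, `y < b`, `b < z`, `c < w` with `b ∥ x`,
`a ∥ y`, `c ∥ z` and `b ∥ w`. In a (3+1)-free poset, an element incomparable to one end of a
3-chain is comparable, in the forced direction, to the other end. Applied to `y < b < z` this
gives `y < c`, then to `y < c < w` it gives `a < w`, and then the chain `x < a < w` forces
`b < w`, contradicting `b ∥ w`.
-/

theorem SetPar.symm {α : Type*} {S T : Set α} (h : SetPar S T) : SetPar T S := ⟨h.2, h.1⟩

section

variable {P : Type*} [PartialOrder P] {a b c d : P}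

theorem dset_subset_dset_of_le (h : a ≤ b) : Dset a ⊆ Dset b :=
  fun _ hx => lt_of_lt_of_le hx h

theorem uset_subset_uset_of_le (h : a ≤ b) : Uset b ⊆ Uset a :=
  fun _ hx => lt_of_le_of_lt h hx

theorem TopTangleRel.symm (h : TopTangleRel a b) : TopTangleRel b a := SetPar.symm h

theorem BotTangleRel.symm (h : BotTangleRel a b) : BotTangleRel b a := SetPar.symm h

theorem TopTangleRel.exists_lt_incomp (h : TopTangleRel a b) : ∃ x < a, Incomp b x := by
  obtain ⟨x, hxa, hxb⟩ := Set.not_subset.mp h.1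
  have hba : ¬ b ≤ a := fun hle => h.2 (dset_subset_dset_of_le hle)
  refine ⟨x, hxa, fun hbx => hba (hbx.trans hxa.le), fun hxb' => ?_⟩
  rcases hxb'.lt_or_eq with hlt | rfl
  · exact hxb hlt
  · exact hba hxa.le

theorem BotTangleRel.exists_gt_incomp (h : BotTangleRel a b) : ∃ z, a < z ∧ Incomp b z := by
  obtain ⟨z, haz, hbz⟩ := Set.not_subset.mp h.1
  have hab : ¬ a ≤ b := fun hle => h.2 (uset_subset_uset_of_le hle)
  refine ⟨z, haz, fun hbz' => ?_, fun hzb => hab (haz.le.trans hzb)⟩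
  rcases hbz'.lt_or_eq with hlt | rfl
  · exact hbz hlt
  · exact hab haz.le

theorem ThreePlusOneFree.lt_of_incomp_left (hP : ThreePlusOneFree P) (hab : a < b) (hbc : b < c)
    (hd : Incomp d a) : d < c := by
  by_contra hdc
  have hdc' : ¬ d ≤ c := fun h => hdc (h.lt_of_ne fun e => hd.2 (e ▸ (hab.trans hbc).le))
  have hcd : ¬ c ≤ d := fun h => hd.2 ((hab.trans hbc).le.trans h)
  have hdb : ¬ d ≤ b := fun h => hdc (h.trans_lt hbc)
  have hbd : ¬ b ≤ d := fun h => hd.2 (hab.le.trans h)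
  exact hP ⟨a, b, c, d, hab, hbc, hd, ⟨hdb, hbd⟩, ⟨hdc', hcd⟩⟩

theorem ThreePlusOneFree.lt_of_incomp_right (hP : ThreePlusOneFree P) (hab : a < b) (hbc : b < c)
    (hd : Incomp d c) : a < d := by
  by_contra had
  have hda : ¬ d ≤ a := fun h => hd.1 (h.trans (hab.trans hbc).le)
  have had' : ¬ a ≤ d := fun h => had (h.lt_of_ne fun e => hd.1 (e ▸ (hab.trans hbc).le))
  have hdb : ¬ d ≤ b := fun h => hd.1 (h.trans hbc.le)
  have hbd : ¬ b ≤ d := fun h => had (hab.trans_le h)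
  exact hP ⟨a, b, c, d, hab, hbc, ⟨hda, had'⟩, ⟨hdb, hbd⟩, hd⟩

end

theorem not_topTangleRel_and_botTangleRel {P : Type*} [PartialOrder P]
    (hP : ThreePlusOneFree P) (a b c : P) :
    ¬ (TopTangleRel a b ∧ BotTangleRel b c) := by
  rintro ⟨hab, hbc⟩
  obtain ⟨x, hxa, hbx⟩ := hab.exists_lt_incomp
  obtain ⟨y, hyb, hay⟩ := hab.symm.exists_lt_incomp
  obtain ⟨z, hbz, hcz⟩ := hbc.exists_gt_incomp
  obtain ⟨w, hcw, hbw⟩ := hbc.symm.exists_gt_incomp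
  have hyc : y < c := hP.lt_of_incomp_right hyb hbz hcz
  have haw : a < w := hP.lt_of_incomp_left hyc hcw hay
  exact hbw.1 (hP.lt_of_incomp_left hxa haw hbx).le
end

section
/- Let P be a (3+1)-free poset. Suppose (a₁, a₂; b₁, b₂) and (a₁', a₂'; b₁', b₂') are induced (2+2) subposets of P (with tops a's and bottoms b's). If a₁ and a₁' lie in the same connected component of the relation ⊤⊤ (i.e., ReflTransGen ⊤⊤ relates a₁ to a₁'), then b₁ and b₁' lie in the same connected component of the relation ⊥⊥ (i.e., ReflTransGen ⊥⊥ relates b₁ to b₁'). -/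
/-- `(a₁, a₂; b₁, b₂)` is an induced `(2+2)` subposet, with tops `a₁, a₂` and
bottoms `b₁, b₂`. -/
def IsTwoPlusTwo {P : Type*} [PartialOrder P] (a₁ a₂ b₁ b₂ : P) : Prop :=
  b₁ < a₁ ∧ b₂ < a₂ ∧ Incomp a₁ a₂ ∧ Incomp b₁ b₂ ∧ Incomp a₁ b₂ ∧ Incomp a₂ b₁

/-!
Every `⊤⊤`-edge `a ⊤⊤ a'` is witnessed by an induced `(2+2)` with tops `a, a'`, and the two
bottoms of an induced `(2+2)` are `⊥⊥`-related. The bottoms of two induced `(2+2)`s sharing a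
top lie in one `⊥⊥`-component. Walking along a `⊤⊤`-path from `a₁` to `a₁'` and chaining these
facts connects `b₁` to `b₁'`.
-/

open Relation

section

variable {P : Type*} [PartialOrder P]

lemma Incomp.not_lt {x y : P} (h : Incomp x y) : ¬ x < y := mt le_of_lt h.1

lemma Incomp.not_gt {x y : P} (h : Incomp x y) : ¬ y < x := mt le_of_lt h.2

lemma botTangleRel_of_lt_of_not_lt {b b' u v : P} (hbu : b < u) (hb'u : ¬ b' < u)
    (hb'v : b' < v) (hbv : ¬ b < v) : BotTangleRel b b' :=
  ⟨fun h => hb'u (h hbu), fun h => hbv (h hb'v)⟩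

namespace IsTwoPlusTwo

lemma swap {a₁ a₂ b₁ b₂ : P} (h : IsTwoPlusTwo a₁ a₂ b₁ b₂) : IsTwoPlusTwo a₂ a₁ b₂ b₁ :=
  let ⟨h₁, h₂, ha, hb, h₁₂, h₂₁⟩ := h
  ⟨h₂, h₁, ⟨ha.2, ha.1⟩, ⟨hb.2, hb.1⟩, h₂₁, h₁₂⟩

lemma botTangleRel {a₁ a₂ b₁ b₂ : P} (h : IsTwoPlusTwo a₁ a₂ b₁ b₂) : BotTangleRel b₁ b₂ :=
  let ⟨h₁, h₂, _, _, h₁₂, h₂₁⟩ := h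
  botTangleRel_of_lt_of_not_lt h₁ h₁₂.not_gt h₂ h₂₁.not_gt

/-- With `(a, c; b, d)` and `(a, c'; b', d')`, the path from `b` to `b'` is `b ⊥⊥ b'`,
`b ⊥⊥ d ⊥⊥ b'` or `b ⊥⊥ d' ⊥⊥ b'`, according to whether `b < c'` and `b' < c`. -/
lemma reflTransGen_botTangleRel_of_same_top {a c b d c' b' d' : P}
    (h : IsTwoPlusTwo a c b d) (h' : IsTwoPlusTwo a c' b' d') :
    ReflTransGen BotTangleRel b b' := by
  obtain ⟨hba, hdc, -, -, had, hcb⟩ := h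
  obtain ⟨hb'a, hd'c', -, -, had', hc'b'⟩ := h'
  by_cases hbc' : b < c'
  · by_cases hb'c : b' < c
    · exact .single <| botTangleRel_of_lt_of_not_lt hbc' hc'b'.not_gt hb'c hcb.not_gt
    · have hbd : BotTangleRel b d :=
        botTangleRel_of_lt_of_not_lt hba had.not_gt hdc hcb.not_gt
      exact .tail (.single hbd) <| botTangleRel_of_lt_of_not_lt hdc hb'c hb'a had.not_gt
  · have hbd' : BotTangleRel b d' := botTangleRel_of_lt_of_not_lt hba had'.not_gt hd'c' hbc'
    exact .tail (.single hbd') <|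
      botTangleRel_of_lt_of_not_lt hd'c' hc'b'.not_gt hb'a had'.not_gt

end IsTwoPlusTwo

lemma TopTangleRel.exists_isTwoPlusTwo {a a' : P} (h : TopTangleRel a a') :
    ∃ b b', IsTwoPlusTwo a a' b b' := by
  obtain ⟨⟨b, hba, hba'⟩, ⟨b', hb'a', hb'a⟩⟩ := And.imp Set.not_subset.mp Set.not_subset.mp h
  have haa' : ¬ a ≤ a' := fun hle => hba' (hba.trans_le hle)
  have ha'a : ¬ a' ≤ a := fun hle => hb'a (hb'a'.trans_le hle)
  refine ⟨b, b', hba, hb'a', ⟨haa', ha'a⟩,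
    ⟨fun hle => hba' (hle.trans_lt hb'a'), fun hle => hb'a (hle.trans_lt hba)⟩,
    ⟨fun hle => haa' (hle.trans hb'a'.le), fun hle => ?_⟩,
    ⟨fun hle => ha'a (hle.trans hba.le), fun hle => ?_⟩⟩
  · exact hle.lt_or_eq.elim hb'a fun heq => haa' (heq ▸ hb'a'.le)
  · exact hle.lt_or_eq.elim hba' fun heq => ha'a (heq ▸ hba.le)

end

theorem matched_bottoms_of_connected_tops_general {P : Type*} [PartialOrder P]
    {a₁ a₂ b₁ b₂ a₁' a₂' b₁' b₂' : P}
    (h : IsTwoPlusTwo a₁ a₂ b₁ b₂) (h' : IsTwoPlusTwo a₁' a₂' b₁' b₂')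
    (htop : Relation.ReflTransGen TopTangleRel a₁ a₁') :
    Relation.ReflTransGen BotTangleRel b₁ b₁' := by
  induction htop generalizing a₂' b₁' b₂' with
  | refl => exact h.reflTransGen_botTangleRel_of_same_top h'
  | @tail m t _ hmt ih =>
    obtain ⟨x, y, hxy⟩ := hmt.exists_isTwoPlusTwo
    exact ((ih hxy).tail hxy.botTangleRel).trans
      (hxy.swap.reflTransGen_botTangleRel_of_same_top h')

theorem matched_bottoms_of_connected_tops {P : Type*} [PartialOrder P]
    (hP : ThreePlusOneFree P) {a₁ a₂ b₁ b₂ a₁' a₂' b₁' b₂' : P}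
    (h : IsTwoPlusTwo a₁ a₂ b₁ b₂) (h' : IsTwoPlusTwo a₁' a₂' b₁' b₂')
    (htop : Relation.ReflTransGen TopTangleRel a₁ a₁') :
    Relation.ReflTransGen BotTangleRel b₁ b₁' :=
  matched_bottoms_of_connected_tops_general h h' htop
end

section
/- Let P be a finite (3+1)-free poset and let a, b ∈ P be vertices with ℓ(a) ≤ ℓ(b) − 2, i.e., height(a) + 2 ≤ height(b). Then a < b. -/
theorem lt_of_height_add_two_le {P : Type*} [PartialOrder P] [Finite P]
    (hP : ThreePlusOneFree P) (a b : P)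
    (h : Order.height a + 2 ≤ Order.height b) : a < b := by
  have : Fintype P := Fintype.ofFinite P
  -- heights are finite
  have hbfin : Order.height b ≠ ⊤ := by
    intro htop
    have hle : Order.height b ≤ (Fintype.card P : ℕ∞) := by
      apply Order.height_le
      intro p _
      exact_mod_cast (p.length_lt_card).le
    rw [htop] at hle
    exact (ENat.coe_lt_top _).not_ge hle
  obtain ⟨n, hn⟩ : ∃ n : ℕ, Order.height b = n := ⟨(Order.height b).toNat, (ENat.coe_toNat hbfin).symm⟩
  have hafin : Order.height a ≠ ⊤ := by
    intro htop
    rw [htop] at h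
    simp [top_add] at h
    exact hbfin h
  obtain ⟨m, hm⟩ : ∃ m : ℕ, Order.height a = m := ⟨(Order.height a).toNat, (ENat.coe_toNat hafin).symm⟩
  rw [hn, hm] at h
  have hmn : m + 2 ≤ n := by exact_mod_cast h
  obtain ⟨p, hlast, hlen⟩ := Order.exists_series_of_height_eq_coe b hn
  have h2n : 2 ≤ n := by omega
  set x : P := p ⟨n - 2, by omega⟩ with hx
  set y : P := p ⟨n - 1, by omega⟩ with hy
  have hxy : x < y := p.strictMono (by simp [Fin.lt_def]; omega)
  have hyb : y < b := by
    have : y < p.last := by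
      apply p.strictMono
      simp [Fin.lt_def, RelSeries.last, Fin.last, hlen]; omega
    rwa [hlast] at this
  have hxht : (n - 2 : ℕ) ≤ Order.height x := by
    simpa using Order.index_le_height p ⟨n - 2, by omega⟩
  have hyht : (n - 1 : ℕ) ≤ Order.height y := by
    simpa using Order.index_le_height p ⟨n - 1, by omega⟩
  by_contra hab
  -- a is incomparable with x, y, b
  have hnab : ¬ a ≤ b := fun hle => by
    rcases eq_or_lt_of_le hle with heq | hlt
    · rw [heq, hn] at hm
      have : n = m := by exact_mod_cast hm
      omega
    · exact hab hlt
  have hnba : ¬ b ≤ a := fun hle => by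
    have := Order.height_mono hle
    rw [hn, hm] at this
    have : n ≤ m := by exact_mod_cast this
    omega
  have hnay : ¬ a ≤ y := fun hle => hab (lt_of_le_of_lt hle hyb)
  have hnya : ¬ y ≤ a := fun hle => by
    have := (Order.height_mono hle).trans_eq hm
    have : (n - 1 : ℕ) ≤ (m : ℕ∞) := hyht.trans this
    have : (n - 1 : ℕ) ≤ m := by exact_mod_cast this
    omega
  have hnax : ¬ a ≤ x := fun hle => hab (lt_of_le_of_lt hle (hxy.trans hyb))
  have hnxa : ¬ x ≤ a := fun hle => by
    rcases eq_or_lt_of_le hle with heq | hlt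
    · exact hab (heq ▸ (hxy.trans hyb))
    · have hxfin : Order.height x < ⊤ :=
        lt_of_le_of_lt (Order.height_mono hle) (by rw [hm]; exact ENat.coe_lt_top m)
      have := Order.height_strictMono hlt hxfin
      rw [hm] at this
      have h1 : Order.height x < (m : ℕ∞) := this
      have h2 : ((n - 2 : ℕ) : ℕ∞) < (m : ℕ∞) := lt_of_le_of_lt hxht h1
      have : (n - 2 : ℕ) < m := by exact_mod_cast h2
      omega
  exact hP ⟨x, y, b, a, hxy, hyb, ⟨hnax, hnxa⟩, ⟨hnay, hnya⟩, ⟨hnab, hnba⟩⟩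
end

section
/- Let P be a finite poset such that for any two vertices a, b ∈ P with height(a) + 2 ≤ height(b) we have a < b. Then P is (3+1)-free if and only if for any two vertices c, d ∈ P with height(c) = height(d), we have U_c ⊆ U_d or D_c ⊆ D_d. -/
/-!
Heights increase strictly along `<` in a finite poset. If `U_c ⊄ U_d` and `D_c ⊄ D_d` for `c`, `d`
on one level, witnesses `y < c < x` with `d ≮ x` and `y ≮ d` form a `(3+1)` with `d`, the heights
ruling out the remaining comparabilities. Conversely, under the height condition a vertex
incomparable to `a` lies within one level of `a`; so in a `(3+1)` formed by `a < b < c` and `d`,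
the vertex `d` is on the level of `b`, and `U_b ⊆ U_d` would give `d < c` while `D_b ⊆ D_d` would
give `a < d`.
-/

open Order

section

variable {P : Type*} [PartialOrder P]

lemma Incomp.symm {x y : P} (h : Incomp x y) : Incomp y x := ⟨h.2, h.1⟩

lemma incomp_of_height_lt_of_not_lt {x y : P} (hxy : height x < height y) (hnlt : ¬ x < y) :
    Incomp x y :=
  ⟨fun hle => hnlt (hle.lt_of_ne (by rintro rfl; exact hxy.false)),
    fun hle => (height_mono hle).not_gt hxy⟩

lemma height_ne_top_of_finite [Finite P] (x : P) : height x ≠ ⊤ := by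
  have := Fintype.ofFinite P
  intro hx
  obtain ⟨p, -, hlen⟩ := height_eq_top_iff.mp hx (Fintype.card P)
  exact (hlen ▸ p.length_lt_card).false

lemma height_lt_height_of_finite [Finite P] {x y : P} (hxy : x < y) : height x < height y :=
  height_strictMono hxy (height_ne_top_of_finite x).lt_top

theorem ThreePlusOneFree.uset_subset_or_dset_subset [Finite P] (hfree : ThreePlusOneFree P)
    {c d : P} (hcd : height c = height d) : Uset c ⊆ Uset d ∨ Dset c ⊆ Dset d := by
  by_contra! hcon
  obtain ⟨⟨x, hcx, hdx⟩, ⟨y, hyc, hyd⟩⟩ := And.imp Set.not_subset.mp Set.not_subset.mp hcon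
  refine hfree ⟨y, c, x, d, hyc, hcx, ?_, ?_, ?_⟩
  · exact (incomp_of_height_lt_of_not_lt (hcd ▸ height_lt_height_of_finite hyc) hyd).symm
  · exact ⟨fun hdc => hdx (hdc.trans_lt hcx), fun hcd' => hyd (hyc.trans_le hcd')⟩
  · exact incomp_of_height_lt_of_not_lt (hcd ▸ height_lt_height_of_finite hcx) hdx

section HeightCondition

variable (h : ∀ a b : P, height a + 2 ≤ height b → a < b)
include h

lemma height_lt_height_add_two_of_incomp {x y : P} (hxy : Incomp x y) :
    height y < height x + 2 :=
  not_le.mp fun hle => hxy.1 (h x y hle).le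

lemma height_eq_of_incomp_of_lt_of_lt [Finite P] {a b c d : P} (hab : a < b) (hbc : b < c)
    (hda : Incomp d a) (hdc : Incomp d c) : height b = height d := by
  have hab' := height_lt_height_of_finite hab
  have hbc' := height_lt_height_of_finite hbc
  have had := height_lt_height_add_two_of_incomp h hda.symm
  have hdc' := height_lt_height_add_two_of_incomp h hdc
  lift height a to ℕ using height_ne_top_of_finite a with ha
  lift height b to ℕ using height_ne_top_of_finite b with hb
  lift height c to ℕ using height_ne_top_of_finite c with hc
  lift height d to ℕ using height_ne_top_of_finite d with hd
  norm_cast at *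
  omega

lemma threePlusOneFree_of_forall_height_eq [Finite P]
    (hcond : ∀ c d : P, height c = height d → Uset c ⊆ Uset d ∨ Dset c ⊆ Dset d) :
    ThreePlusOneFree P := by
  rintro ⟨a, b, c, d, hab, hbc, hda, -, hdc⟩
  rcases hcond b d (height_eq_of_incomp_of_lt_of_lt h hab hbc hda hdc) with hU | hD
  · exact hdc.1 (hU hbc).le
  · exact hda.2 (hD hab).le

end HeightCondition

end

theorem threePlusOneFree_iff_of_height_cond {P : Type*} [PartialOrder P] [Finite P]
    (h : ∀ a b : P, Order.height a + 2 ≤ Order.height b → a < b) :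
    ThreePlusOneFree P ↔
      ∀ c d : P, Order.height c = Order.height d → (Uset c ⊆ Uset d ∨ Dset c ⊆ Dset d) :=
  ⟨fun hfree _ _ => hfree.uset_subset_or_dset_subset, threePlusOneFree_of_forall_height_eq h⟩
end

section
/- Let α and β be finite types, let σ be a permutation of α and τ a permutation of β, and let d = |{a ∈ α : σ(a) ≠ a}| be the number of non-fixed points of σ. Then the number of orbits of the permutation σ × τ of α × β (given by (a,b) ↦ (σ(a), τ(b))) satisfies 2 · (number of orbits) ≤ (2·|α| − d) · |β|. -/
theorem orbit_count_bound {α β : Type*} [Finite α] [Finite β]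
    (σ : Equiv.Perm α) (τ : Equiv.Perm β) :
    2 * Nat.card (Quot (fun p q : α × β => (Equiv.prodCongr σ τ) p = q)) ≤
      (2 * Nat.card α - Nat.card {a : α // σ a ≠ a}) * Nat.card β := by
  classical
  cases nonempty_fintype α
  cases nonempty_fintype β
  set π := Equiv.prodCongr σ τ with hπdef
  set r : α × β → α × β → Prop := fun p q => π p = q with hr
  letI hFin : Fintype (Quot r) :=
    Fintype.ofSurjective (Quot.mk r) (fun q => Quot.exists_rep q)
  set w : α × β → ℕ := fun p => if σ p.1 = p.1 then 2 else 1 with hw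
  have hπmem : ∀ p : α × β, Quot.mk r (π p) = Quot.mk r p :=
    fun p => (Quot.sound (show r p (π p) from rfl)).symm
  -- per fiber bound
  have hfib : ∀ q : Quot r,
      2 ≤ ∑ p ∈ Finset.univ.filter (fun p => Quot.mk r p = q), w p := by
    intro q
    obtain ⟨p, hp⟩ := Quot.exists_rep q
    have hpmem : p ∈ Finset.univ.filter (fun p => Quot.mk r p = q) := by
      simp [hp]
    by_cases hfix : ∃ x ∈ Finset.univ.filter (fun p => Quot.mk r p = q), σ x.1 = x.1
    · obtain ⟨x, hx, hσx⟩ := hfix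
      have hx2 : w x = 2 := if_pos hσx
      calc 2 = w x := hx2.symm
        _ ≤ _ := Finset.single_le_sum (fun i _ => Nat.zero_le (w i)) hx
    · push_neg at hfix
      have hσp : σ p.1 ≠ p.1 := hfix p hpmem
      have hπp : π p ∈ Finset.univ.filter (fun p => Quot.mk r p = q) := by
        simp only [Finset.mem_filter, Finset.mem_univ, true_and]
        rw [hπmem p, hp]
      have hne : p ≠ π p := by
        intro h
        apply hσp
        have h1 : p.1 = (π p).1 := by rw [← h]
        simpa [hπdef] using h1.symm
      have hcard : 2 ≤ (Finset.univ.filter (fun p => Quot.mk r p = q)).card := by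
        exact Finset.one_lt_card.mpr ⟨p, hpmem, π p, hπp, hne⟩
      calc 2 ≤ (Finset.univ.filter (fun p => Quot.mk r p = q)).card := hcard
        _ = ∑ p ∈ Finset.univ.filter (fun p => Quot.mk r p = q), 1 := by simp
        _ ≤ _ := Finset.sum_le_sum (fun i hi => by simp [hw, hfix i hi])
  -- total weight
  have htot : ∑ p : α × β, w p =
      (Fintype.card {a : α // σ a = a} + Fintype.card α) * Fintype.card β := by
    have h2 : ∑ a : α, (if σ a = a then (2:ℕ) else 1)
        = Fintype.card {a : α // σ a = a} + Fintype.card α := by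
      have : ∀ a : α, (if σ a = a then (2:ℕ) else 1)
          = (if σ a = a then 1 else 0) + 1 := by
        intro a; by_cases h : σ a = a <;> simp [h]
      rw [Finset.sum_congr rfl (fun a _ => this a), Finset.sum_add_distrib]
      simp [Fintype.card_subtype, Finset.sum_ite_eq, Finset.sum_boole]
    calc ∑ p : α × β, w p
        = ∑ a : α, ∑ _b : β, (if σ a = a then (2:ℕ) else 1) := by
          rw [Fintype.sum_prod_type]
      _ = ∑ a : α, (if σ a = a then (2:ℕ) else 1) * Fintype.card β := by
          simp [mul_comm]
      _ = (∑ a : α, (if σ a = a then (2:ℕ) else 1)) * Fintype.card β := by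
          rw [Finset.sum_mul]
      _ = _ := by rw [h2]
  have hcompl : Fintype.card {a : α // σ a = a} + Fintype.card {a : α // σ a ≠ a}
      = Fintype.card α := by
    simp only [Fintype.card_subtype]
    exact Finset.card_filter_add_card_filter_not _
  -- assemble
  have hmain : 2 * Fintype.card (Quot r) ≤ ∑ p : α × β, w p := by
    calc 2 * Fintype.card (Quot r) = ∑ _q : Quot r, 2 := by
          simp [mul_comm]
      _ ≤ ∑ q : Quot r, ∑ p ∈ Finset.univ.filter (fun p => Quot.mk r p = q), w p :=
          Finset.sum_le_sum (fun q _ => hfib q)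
      _ = ∑ p : α × β, w p := Finset.sum_fiberwise _ _ _
  have hrw : (2 * Nat.card α - Nat.card {a : α // σ a ≠ a}) * Nat.card β
      = (Fintype.card {a : α // σ a = a} + Fintype.card α) * Fintype.card β := by
    rw [Nat.card_eq_fintype_card, Nat.card_eq_fintype_card, Nat.card_eq_fintype_card]
    congr 1
    omega
  rw [Nat.card_eq_fintype_card, hrw, ← htot]
  exact hmain
end
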